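/- Let G be a C¹ flow on ℝ³, t* > 0, and τ a continuously differentiable real-valued function on an open neighborhood N of e₃ in ℝ³ with τ(e₃) = t*, such that G(τ(y), y) ∈ M_I for every y ∈ N ∩ M_E. Set x = G(t*, e₃) and assume x ∈ M_I ∩ L, ∂₁G(0, e₃) ∉ L, and ∂₁G(0, x) ∉ ℝx^⊥ ⊕ ℝe₃, where x^⊥ = (−x₂, x₁, 0). Then the Fréchet derivative at e₃ of the map E : N → ℝ³, E(y) = G(τ(y), y), restricted to L, is a linear isomorphism from L onto ℝx^⊥ ⊕ ℝe₃. -/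

import Mathlib

noncomputable section
open Real Set

abbrev R3 := EuclideanSpace ℝ (Fin 3)

/-- Orthogonal projection onto `L = ℝe₁ ⊕ ℝe₂`. -/
def PL (x : R3) : R3 := WithLp.toLp 2 (fun i => if (i : ℕ) = 2 then 0 else x i)

/-- Orthogonal projection onto `U = ℝe₃`. -/
def PU (x : R3) : R3 := WithLp.toLp 2 (fun i => if (i : ℕ) = 2 then x i else 0)

/-- The plane `L = ℝe₁ ⊕ ℝe₂`. -/
def Lset : Set R3 := {x | x 2 = 0}

/-- The line `U = ℝe₃`. -/
def Uset : Set R3 := {x | x 0 = 0 ∧ x 1 = 0}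

/-- `B₁ = {x : |P_L x| ≤ 1, |P_U x| ≤ 1}`. -/
def B1 : Set R3 := {x | ‖PL x‖ ≤ 1 ∧ ‖PU x‖ ≤ 1}

/-- The linearized flow `T(t)`. -/
def Tmap (σ μ u t : ℝ) (x : R3) : R3 := WithLp.toLp 2 fun i =>
  if (i : ℕ) = 0 then exp (σ * t) * (cos (μ * t) * x 0 + sin (μ * t) * x 1)
  else if (i : ℕ) = 1 then exp (σ * t) * (-(sin (μ * t)) * x 0 + cos (μ * t) * x 1)
  else exp (u * t) * x 2

/-- A C¹ flow on ℝ³. -/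
def IsC1Flow (G : ℝ → R3 → R3) : Prop :=
  ContDiff ℝ 1 (fun p : ℝ × R3 => G p.1 p.2) ∧ (∀ x, G 0 x = x) ∧
    ∀ s t x, G (t + s) x = G t (G s x)

/-- `M` is invariant under the flow `G` in the set `N`. -/
def InvariantIn (G : ℝ → R3 → R3) (M N : Set R3) : Prop :=
  ∀ x ∈ M ∩ N, ∀ I : Set ℝ, (0 : ℝ) ∈ I → I.OrdConnected →
    (∀ t ∈ I, G t x ∈ N) → ∀ t ∈ I, G t x ∈ M

/-- The third basis vector `e₃`. -/
def e3 : R3 := WithLp.toLp 2 (fun i => if (i : ℕ) = 2 then 1 else 0)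

/-- For `x` in the plane `L`, the rotation `x^⊥ = (-x₂, x₁, 0)`. -/
def perpv (w : R3) : R3 := WithLp.toLp 2 fun i =>
  if (i : ℕ) = 0 then -(w 1) else if (i : ℕ) = 1 then w 0 else 0

/-!
Write `V = ∂ₜG(0, ·)` for the vector field of the flow. Differentiating
`G (s + t) y = G s (G t y)` and `G t (G s y) = G s (G t y)` in `s` at `s = 0` gives
`∂ₜG(t, y) = V (G t y) = D_yG(t, y) (V y)`, so by the chain rule
`DE(e₃) v = D_yG(t*, e₃) (v + Dτ(e₃) v • V e₃)`. The spatial derivative `D_yG(t, y)` has the left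
inverse `D_yG(-t, G t y)`, and `V e₃ ∉ L`, hence `DE(e₃)` is injective on `L`. Differentiating
`|P_L E|² = 1` along the lines `e₃ + s v`, `v ∈ L`, shows that `DE(e₃)` maps `L` into the tangent
plane `(ℝ x)ᗮ = ℝ x^⊥ ⊕ ℝ e₃` of the cylinder at `x`. Both planes are two-dimensional, so `DE(e₃)`
maps `L` onto it.
-/

open scoped RealInnerProductSpace Topology

theorem Submodule.eq_zero_of_add_smul_eq_zero {K V : Type*} [Field K] [AddCommGroup V]
    [Module K V] {p : Submodule K V} {v w : V} {c : K} (hv : v ∈ p) (hw : w ∉ p)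
    (h : v + c • w = 0) : v = 0 := by
  obtain rfl | hc := eq_or_ne c 0
  · simpa using h
  · have hcw : c • w ∈ p := by
      rw [eq_neg_of_add_eq_zero_right h]
      exact p.neg_mem hv
    exact absurd ((p.smul_mem_iff hc).mp hcw) hw

theorem Submodule.map_eq_of_injOn_of_finrank_le {K V W : Type*} [Field K] [AddCommGroup V]
    [Module K V] [AddCommGroup W] [Module K W] {f : V →ₗ[K] W} {p : Submodule K V}
    {q : Submodule K W} [FiniteDimensional K q] (hle : p.map f ≤ q) (hinj : Set.InjOn f p)
    (hrank : Module.finrank K q ≤ Module.finrank K p) : p.map f = q := by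
  have hinj' : Function.Injective (f.domRestrict p) := by
    rwa [LinearMap.injective_domRestrict_iff, LinearMap.disjoint_ker_iff_injOn]
  refine Submodule.eq_of_le_of_finrank_le hle ?_
  rwa [← LinearMap.range_domRestrict, LinearMap.finrank_range_of_inj hinj']

section Flow

variable {E : Type*} [NormedAddCommGroup E] [NormedSpace ℝ E] {G : ℝ → E → E}

theorem deriv_flow_eq_deriv_flow_zero (hlaw : ∀ s t x, G (t + s) x = G t (G s x))
    (t : ℝ) (y : E) : deriv (fun s => G s y) t = deriv (fun s => G s (G t y)) 0 := by
  have h := deriv_comp_add_const (f := fun s => G s y) t 0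
  simp only [zero_add] at h
  simp only [← hlaw t, h]

variable (hG : Differentiable ℝ fun p : ℝ × E => G p.1 p.2)
include hG

theorem differentiableAt_flow_time (t : ℝ) (y : E) : DifferentiableAt ℝ (fun s => G s y) t :=
  (hG (t, y)).comp (f := fun s => (s, y)) t (differentiableAt_id.prodMk (differentiableAt_const y))

theorem differentiableAt_flow_space (t : ℝ) (y : E) : DifferentiableAt ℝ (G t) y :=
  (hG (t, y)).comp (f := fun z => (t, z)) y ((differentiableAt_const t).prodMk differentiableAt_id)

theorem differentiableAt_flow_apply_time {τ : E → ℝ} {y₀ : E} (hτ : DifferentiableAt ℝ τ y₀) :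
    DifferentiableAt ℝ (fun y => G (τ y) y) y₀ :=
  (hG _).comp (f := fun y => (τ y, y)) y₀ (hτ.prodMk differentiableAt_id)

theorem fderiv_flow_uncurry_apply (t : ℝ) (y : E) (a : ℝ) (v : E) :
    fderiv ℝ (fun p : ℝ × E => G p.1 p.2) (t, y) (a, v) =
      a • deriv (fun s => G s y) t + fderiv ℝ (G t) y v := by
  set F' := fderiv ℝ (fun p : ℝ × E => G p.1 p.2) (t, y)
  have htime : HasDerivAt (fun s => G s y) (F' (1, 0)) t :=
    (hG (t, y)).hasFDerivAt.comp_hasDerivAt (f := fun s => (s, y)) t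
      ((hasDerivAt_id t).prodMk (hasDerivAt_const t y))
  have hspace : HasFDerivAt (G t) (F'.comp (.inr ℝ ℝ E)) y :=
    (hG (t, y)).hasFDerivAt.comp y (hasFDerivAt_prodMk_right t y)
  have hsplit : ((a, v) : ℝ × E) = a • (1, 0) + (0, v) := by simp
  rw [htime.deriv, hspace.fderiv, hsplit, map_add, map_smul]
  rfl

variable (hlaw : ∀ s t x, G (t + s) x = G t (G s x)) (h0 : ∀ x, G 0 x = x)
include hlaw h0

theorem fderiv_flow_apply_deriv (t : ℝ) (y : E) :
    fderiv ℝ (G t) y (deriv (fun s => G s y) 0) = deriv (fun s => G s (G t y)) 0 := by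
  have hcomm : (fun s => G s (G t y)) = G t ∘ fun s => G s y := by
    funext s
    rw [Function.comp_apply, ← hlaw, ← hlaw, add_comm]
  rw [hcomm, fderiv_comp_deriv_of_eq _ (differentiableAt_flow_space hG t y)
    (differentiableAt_flow_time hG 0 y) (h0 y).symm, h0]

theorem fderiv_flow_injective (t : ℝ) (y : E) : Function.Injective (fderiv ℝ (G t) y) := by
  have hinv : G (-t) ∘ G t = id := by
    funext z
    rw [Function.comp_apply, ← hlaw, neg_add_cancel, h0, id]
  have hcomp := fderiv_comp y (differentiableAt_flow_space hG (-t) (G t y))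
    (differentiableAt_flow_space hG t y)
  rw [hinv, fderiv_id] at hcomp
  exact Function.LeftInverse.injective (g := fderiv ℝ (G (-t)) (G t y))
    fun v => (DFunLike.congr_fun hcomp v).symm

theorem fderiv_flow_apply_time_apply {τ : E → ℝ} {y₀ : E} (hτ : DifferentiableAt ℝ τ y₀) (v : E) :
    fderiv ℝ (fun y => G (τ y) y) y₀ v =
      fderiv ℝ (G (τ y₀)) y₀ (v + fderiv ℝ τ y₀ v • deriv (fun s => G s y₀) 0) := by
  have hcomp : HasFDerivAt (fun y => G (τ y) y) _ y₀ :=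
    (hG (τ y₀, y₀)).hasFDerivAt.comp (f := fun y => (τ y, y)) y₀
      (hτ.hasFDerivAt.prodMk (hasFDerivAt_id y₀))
  rw [hcomp.fderiv, ContinuousLinearMap.comp_apply, ContinuousLinearMap.prod_apply,
    fderiv_flow_uncurry_apply hG, deriv_flow_eq_deriv_flow_zero hlaw,
    ← fderiv_flow_apply_deriv hG hlaw h0, map_add, map_smul, add_comm]
  rfl

theorem injOn_fderiv_flow_apply_time {τ : E → ℝ} {y₀ : E} (hτ : DifferentiableAt ℝ τ y₀)
    {p : Submodule ℝ E} (hp : deriv (fun s => G s y₀) 0 ∉ p) :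
    Set.InjOn (fderiv ℝ (fun y => G (τ y) y) y₀) p := by
  refine LinearMap.disjoint_ker_iff_injOn.mp (LinearMap.disjoint_ker.mpr fun v hv hDv => ?_)
  refine Submodule.eq_zero_of_add_smul_eq_zero (c := fderiv ℝ τ y₀ v) hv hp
    (fderiv_flow_injective hG hlaw h0 (τ y₀) y₀ ?_)
  rwa [map_zero, ← fderiv_flow_apply_time_apply hG hlaw h0 hτ]

end Flow

theorem norm_PL_sq (z : R3) : ‖PL z‖ ^ 2 = z 0 ^ 2 + z 1 ^ 2 := by
  rw [EuclideanSpace.norm_eq, Real.sq_sqrt (by positivity)]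
  simp [Fin.sum_univ_three, PL, sq_abs]

theorem ne_zero_of_norm_PL_eq_one {x : R3} (hx : ‖PL x‖ = 1) : x ≠ 0 := by
  rintro rfl
  have h := norm_PL_sq 0
  rw [hx] at h
  simp at h

theorem e3_ne_zero : e3 ≠ 0 := fun h => by simpa [e3] using congrArg (fun z : R3 => z 2) h

theorem finrank_orthogonal_span_singleton_eq_two {x : R3} (hx : x ≠ 0) :
    Module.finrank ℝ (ℝ ∙ x)ᗮ = 2 :=
  have : Fact (Module.finrank ℝ R3 = 2 + 1) := ⟨by simp⟩
  Submodule.finrank_orthogonal_span_singleton hx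

theorem inner_eq_of_mem_Lset {x : R3} (hx : x ∈ Lset) (y : R3) :
    ⟪x, y⟫ = x 0 * y 0 + x 1 * y 1 := by
  have hx2 : x 2 = 0 := hx
  simp [PiLp.inner_apply, Fin.sum_univ_three, hx2, mul_comm]

theorem Lset_eq_orthogonal_e3 : Lset = ((ℝ ∙ e3)ᗮ : Submodule ℝ R3) := by
  ext y
  simp [Submodule.mem_orthogonal_singleton_iff_inner_right, PiLp.inner_apply, Fin.sum_univ_three,
    e3, Lset]

theorem r3_ext {z w : R3} (h0 : z 0 = w 0) (h1 : z 1 = w 1) (h2 : z 2 = w 2) : z = w := by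
  ext i
  fin_cases i <;> assumption

theorem smul_perpv_add_smul_e3_apply (w : R3) (a b : ℝ) :
    (a • perpv w + b • e3) 0 = -(a * w 1) ∧ (a • perpv w + b • e3) 1 = a * w 0 ∧
      (a • perpv w + b • e3) 2 = b := by
  simp [perpv, e3]

theorem setOf_perpv_e3_eq_orthogonal {x : R3} (hx : x ∈ Lset) (hx1 : ‖PL x‖ = 1) :
    {y : R3 | ∃ a b : ℝ, y = a • perpv x + b • e3} = ((ℝ ∙ x)ᗮ : Submodule ℝ R3) := by
  have hx01 : x 0 ^ 2 + x 1 ^ 2 = 1 := by rw [← norm_PL_sq, hx1, one_pow]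
  ext y
  simp only [Set.mem_ofPred_eq, SetLike.mem_coe, Submodule.mem_orthogonal_singleton_iff_inner_right,
    inner_eq_of_mem_Lset hx]
  constructor
  · rintro ⟨a, b, rfl⟩
    obtain ⟨h0, h1, -⟩ := smul_perpv_add_smul_e3_apply x a b
    rw [h0, h1]
    ring
  · intro h
    obtain ⟨h0, h1, h2⟩ := smul_perpv_add_smul_e3_apply x (-(x 1) * y 0 + x 0 * y 1) (y 2)
    refine ⟨_, _, r3_ext ?_ ?_ h2.symm⟩
    · rw [h0]
      linear_combination (-(y 0)) * hx01 + x 0 * h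
    · rw [h1]
      linear_combination (-(y 1)) * hx01 + x 1 * h

theorem inner_deriv_eq_zero_of_norm_PL_eq_one {c : ℝ → R3} {c' : R3} {t : ℝ}
    (hc : HasDerivAt c c' t) (hct : c t ∈ Lset) (hcyl : ∀ᶠ s in 𝓝 t, ‖PL (c s)‖ = 1) :
    ⟪c t, c'⟫ = 0 := by
  have hcoord (i : Fin 3) : HasDerivAt (fun s => c s i) (c' i) t :=
    (EuclideanSpace.proj i : R3 →L[ℝ] ℝ).hasFDerivAt.comp_hasDerivAt t hc
  have hq := ((hcoord 0).pow 2).add ((hcoord 1).pow 2)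
  have hconst : (fun s => c s 0 ^ 2 + c s 1 ^ 2) =ᶠ[𝓝 t] fun _ => 1 := by
    filter_upwards [hcyl] with s hs
    rw [← norm_PL_sq, hs, one_pow]
  have h := hq.unique ((hasDerivAt_const t (1 : ℝ)).congr_of_eventuallyEq hconst)
  rw [inner_eq_of_mem_Lset hct]
  linear_combination h / 2

theorem inner_fderiv_eq_zero_of_mem_cylinder {f : R3 → R3} {p v : R3}
    (hf : DifferentiableAt ℝ f p) (hfp : f p ∈ Lset)
    (hcyl : ∀ᶠ y in 𝓝 p, y - p ∈ Lset → ‖PL (f y)‖ = 1) (hv : v ∈ Lset) :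
    ⟪f p, fderiv ℝ f p v⟫ = 0 := by
  have hline : HasDerivAt (fun s : ℝ => p + s • v) v 0 := by
    simpa using ((hasDerivAt_id (0 : ℝ)).smul_const v).const_add p
  have hc : HasDerivAt (fun s : ℝ => f (p + s • v)) (fderiv ℝ f p v) 0 := by
    have hf' : HasFDerivAt f (fderiv ℝ f p) (p + (0 : ℝ) • v) := by simpa using hf.hasFDerivAt
    exact hf'.comp_hasDerivAt 0 hline
  have hlineL (s : ℝ) : p + s • v - p ∈ Lset := by
    rw [Lset_eq_orthogonal_e3] at hv ⊢
    simpa using Submodule.smul_mem _ s hv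
  have hcyl' : ∀ᶠ s in 𝓝 (0 : ℝ), ‖PL (f (p + s • v))‖ = 1 := by
    have hto : Filter.Tendsto (fun s : ℝ => p + s • v) (𝓝 0) (𝓝 p) := by
      simpa using hline.continuousAt.tendsto
    filter_upwards [hto.eventually hcyl] with s hs using hs (hlineL s)
  simpa using inner_deriv_eq_zero_of_norm_PL_eq_one hc (by simpa using hfp) hcyl'

theorem statement9_general
    (G : ℝ → R3 → R3) (hG : IsC1Flow G)
    (tstar : ℝ)
    (N : Set R3) (hN : IsOpen N) (he3N : e3 ∈ N)
    (τ : R3 → ℝ) (hτ : ContDiffOn ℝ 1 τ N) (hτe3 : τ e3 = tstar)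
    (hMI : ∀ y ∈ N, y - e3 ∈ Lset → ‖PL (G (τ y) y)‖ = 1)
    (hxMI : ‖PL (G tstar e3)‖ = 1) (hxL : G tstar e3 ∈ Lset)
    (htransE : deriv (fun s => G s e3) 0 ∉ Lset) :
    (fun v => fderiv ℝ (fun y => G (τ y) y) e3 v) '' Lset =
      {y : R3 | ∃ a b : ℝ, y = a • perpv (G tstar e3) + b • e3} ∧
    Set.InjOn (fun v => fderiv ℝ (fun y => G (τ y) y) e3 v) Lset := by
  obtain ⟨hGc, hG0, hlaw⟩ := hG
  have hGd : Differentiable ℝ fun p : ℝ × R3 => G p.1 p.2 := hGc.differentiable one_ne_zero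
  have hτd : DifferentiableAt ℝ τ e3 :=
    (hτ.differentiableOn one_ne_zero e3 he3N).differentiableAt (hN.mem_nhds he3N)
  set D := fderiv ℝ (fun y => G (τ y) y) e3
  rw [Lset_eq_orthogonal_e3] at htransE
  have hinj : Set.InjOn D (ℝ ∙ e3)ᗮ := injOn_fderiv_flow_apply_time hGd hlaw hG0 hτd htransE
  have hmaps : ((ℝ ∙ e3)ᗮ).map (D : R3 →ₗ[ℝ] R3) ≤ (ℝ ∙ G tstar e3)ᗮ := by
    rintro _ ⟨v, hv, rfl⟩
    rw [Submodule.mem_orthogonal_singleton_iff_inner_right, ← hτe3]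
    refine inner_fderiv_eq_zero_of_mem_cylinder (differentiableAt_flow_apply_time hGd hτd)
      (by rwa [hτe3]) (Filter.eventually_of_mem (hN.mem_nhds he3N) hMI) ?_
    rwa [Lset_eq_orthogonal_e3]
  have hrank : Module.finrank ℝ (ℝ ∙ G tstar e3)ᗮ ≤ Module.finrank ℝ (ℝ ∙ e3)ᗮ := by
    rw [finrank_orthogonal_span_singleton_eq_two (ne_zero_of_norm_PL_eq_one hxMI),
      finrank_orthogonal_span_singleton_eq_two e3_ne_zero]
  rw [setOf_perpv_e3_eq_orthogonal hxL hxMI, Lset_eq_orthogonal_e3,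
    ← Submodule.map_eq_of_injOn_of_finrank_le hmaps hinj hrank, Submodule.map_coe]
  exact ⟨rfl, hinj⟩

theorem statement9
    (G : ℝ → R3 → R3) (hG : IsC1Flow G)
    (tstar : ℝ) (htstar : 0 < tstar)
    (N : Set R3) (hN : IsOpen N) (he3N : e3 ∈ N)
    (τ : R3 → ℝ) (hτ : ContDiffOn ℝ 1 τ N) (hτe3 : τ e3 = tstar)
    (hMI : ∀ y ∈ N, y - e3 ∈ Lset → ‖PL (G (τ y) y)‖ = 1)
    (hxMI : ‖PL (G tstar e3)‖ = 1) (hxL : G tstar e3 ∈ Lset)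
    (htransE : deriv (fun s => G s e3) 0 ∉ Lset)
    (htransI : deriv (fun s => G s (G tstar e3)) 0 ∉
      {y : R3 | ∃ a b : ℝ, y = a • perpv (G tstar e3) + b • e3}) :
    (fun v => fderiv ℝ (fun y => G (τ y) y) e3 v) '' Lset =
      {y : R3 | ∃ a b : ℝ, y = a • perpv (G tstar e3) + b • e3} ∧
    Set.InjOn (fun v => fderiv ℝ (fun y => G (τ y) y) e3 v) Lset :=
  statement9_general G hG tstar N hN he3N τ hτ hτe3 hMI hxMI hxL htransE
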